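/- arXiv:2406.00243 — 2 statements merged into one kernel-verified Lean document; each statement's English description precedes it below -/
import Mathlib

section
/- Let $N \geq 2$, let $S \subseteq \{0,\dots,N-1\}^n$, let $1 \leq r < n$, and let $a, b \in \{0,\dots,N-1\}^r$ be distinct. For $x \in \{a,b\}$ define $T_x = \{p \in \{0,\dots,N-1\}^{n-r} : x \times p \in S\}$, where $x \times p$ denotes concatenation. If there is an injective affine map $\iota : \{0,1\}^m \to \mathbb{Z}^{n-r}$ with image contained in $T_a \cap T_b$, then there is an injective affine map $\{0,1\}^{m+1} \to \mathbb{Z}^n$ with image contained in $S$. -/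
/-!
The two points `a ≠ b` form an affine `1`-cube `t ↦ a + t (b - a)`, and the product of an
affine `k`-cube in `ℤ^r` with an affine `m`-cube in `ℤ^s`, concatenated coordinatewise, is an
affine `(k + m)`-cube in `ℤ^(r + s)` whose linear part is block diagonal. The product of
`{a, b}` with `T_a ∩ T_b` lies in `S`.
-/

open scoped BigOperators

/-- The 0/1 cube in `ℤ^m`. -/
def cube (m : ℕ) : Set (Fin m → ℤ) := {v | ∀ i, v i = 0 ∨ v i = 1}

/-- `S` contains an affine copy of the `m`-dimensional 0/1 cube: there is a map
`ι` which is affine (of the form `y ↦ A y + z` on the cube), injective on the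
cube, and whose image of the cube is contained in `S`. -/
def HasCube {n : ℕ} (S : Set (Fin n → ℤ)) (m : ℕ) : Prop :=
  ∃ ι : (Fin m → ℤ) → (Fin n → ℤ),
    (∃ A : Matrix (Fin n) (Fin m) ℤ, ∃ z : Fin n → ℤ, ∀ y ∈ cube m, ι y = A.mulVec y + z) ∧
    Set.InjOn ι (cube m) ∧ ι '' (cube m) ⊆ S

/-- `M(S)`: the largest `m` such that `S` contains an affine copy of the `m`-cube. -/
noncomputable def Mval {n : ℕ} (S : Set (Fin n → ℤ)) : ℕ := sSup {m | HasCube S m}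

/-- The box `{0,1,…,N-1}^n` inside `ℤ^n`. -/
noncomputable def box (N n : ℕ) : Finset (Fin n → ℤ) := Fintype.piFinset fun _ => Finset.Icc 0 ((N : ℤ) - 1)

/-- `f_N(n,c)`: the minimal value of `M(S)` over subsets `S` of the box of density at least `c`. -/
noncomputable def fN (N n : ℕ) (c : ℝ) : ℕ :=
  sInf {k | ∃ S : Finset (Fin n → ℤ), S ⊆ box N n ∧ c * (N : ℝ) ^ n ≤ S.card ∧
    Mval (S : Set (Fin n → ℤ)) = k}

open Matrix

section BlockDiagonal

variable {R : Type*} [NonUnitalNonAssocSemiring R] {p q k m : ℕ}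

theorem Fin.append_dotProduct (u : Fin k → R) (v : Fin m → R) (y : Fin (k + m) → R) :
    Fin.append u v ⬝ᵥ y =
      u ⬝ᵥ (fun i => y (Fin.castAdd m i)) + v ⬝ᵥ (fun i => y (Fin.natAdd k i)) := by
  simp [dotProduct, Fin.sum_univ_add]

def Matrix.finBlockDiagonal (A : Matrix (Fin p) (Fin k) R) (B : Matrix (Fin q) (Fin m) R) :
    Matrix (Fin (p + q)) (Fin (k + m)) R :=
  Fin.append (fun i => Fin.append (A i) 0) (fun i => Fin.append 0 (B i))

theorem Matrix.finBlockDiagonal_mulVec_add (A : Matrix (Fin p) (Fin k) R)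
    (B : Matrix (Fin q) (Fin m) R) (z : Fin p → R) (w : Fin q → R) (y : Fin (k + m) → R) :
    finBlockDiagonal A B *ᵥ y + Fin.append z w =
      Fin.append (A *ᵥ ((Fin.appendEquiv k m).symm y).1 + z)
        (B *ᵥ ((Fin.appendEquiv k m).symm y).2 + w) := by
  funext i
  refine Fin.addCases (fun i => ?_) (fun i => ?_) i <;>
    simp [finBlockDiagonal, mulVec, Fin.append_dotProduct]

end BlockDiagonal

theorem mapsTo_appendEquiv_symm_cube (k m : ℕ) :
    Set.MapsTo (Fin.appendEquiv k m).symm (cube (k + m)) (cube k ×ˢ cube m) :=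
  fun _ hy => ⟨fun _ => hy _, fun _ => hy _⟩

theorem HasCube.mono {n m : ℕ} {S T : Set (Fin n → ℤ)} (h : HasCube S m) (hST : S ⊆ T) :
    HasCube T m :=
  let ⟨ι, hι, hinj, himg⟩ := h
  ⟨ι, hι, hinj, himg.trans hST⟩

theorem hasCube_pair {r : ℕ} {a b : Fin r → ℤ} (hab : a ≠ b) : HasCube {a, b} 1 := by
  obtain ⟨i, hi⟩ := Function.ne_iff.mp hab
  refine ⟨fun y => y 0 • (b - a) + a, ⟨Matrix.of fun j _ => (b - a) j, a, fun y _ => ?_⟩, ?_, ?_⟩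
  · funext j
    simp [mulVec, dotProduct, mul_comm]
  · intro y _ y' _ hyy'
    have hyi : y 0 * (b i - a i) = y' 0 * (b i - a i) := by
      simpa using congrFun hyy' i
    funext j
    rw [Subsingleton.elim j 0]
    exact mul_right_cancel₀ (sub_ne_zero.mpr hi.symm) hyi
  · rintro _ ⟨y, hy, rfl⟩
    rcases hy 0 with hy0 | hy0 <;> simp [hy0]

theorem HasCube.image2_append {r s k m : ℕ} {U : Set (Fin r → ℤ)} {T : Set (Fin s → ℤ)}
    (hU : HasCube U k) (hT : HasCube T m) : HasCube (Set.image2 Fin.append U T) (k + m) := by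
  obtain ⟨ι₁, ⟨A, z, hι₁⟩, hinj₁, himg₁⟩ := hU
  obtain ⟨ι₂, ⟨B, w, hι₂⟩, hinj₂, himg₂⟩ := hT
  let split := (Fin.appendEquiv (α := ℤ) k m).symm
  have hsplit := mapsTo_appendEquiv_symm_cube k m
  refine ⟨Fin.appendEquiv r s ∘ Prod.map ι₁ ι₂ ∘ split,
    ⟨finBlockDiagonal A B, Fin.append z w, fun y hy => ?_⟩, ?_, ?_⟩
  · obtain ⟨hy₁, hy₂⟩ := hsplit hy
    rw [finBlockDiagonal_mulVec_add, ← hι₁ _ hy₁, ← hι₂ _ hy₂]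
    rfl
  · exact (Fin.appendEquiv r s).injective.injOn.comp
      ((hinj₁.prodMap hinj₂).comp split.injective.injOn hsplit) (Set.mapsTo_univ _ _)
  · rintro _ ⟨y, hy, rfl⟩
    obtain ⟨hy₁, hy₂⟩ := hsplit hy
    exact ⟨_, himg₁ ⟨_, hy₁, rfl⟩, _, himg₂ ⟨_, hy₂, rfl⟩, rfl⟩

theorem stmt2_general (r s m : ℕ)
    (S : Set (Fin (r + s) → ℤ))
    (a b : Fin r → ℤ) (hab : a ≠ b)
    (h : HasCube ({p : Fin s → ℤ | Fin.append a p ∈ S} ∩ {p : Fin s → ℤ | Fin.append b p ∈ S}) m) :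
    HasCube S (m + 1) := by
  rw [Nat.add_comm m 1]
  refine ((hasCube_pair hab).image2_append h).mono ?_
  rintro _ ⟨u, rfl | rfl, p, hp, rfl⟩
  exacts [hp.1, hp.2]

theorem stmt2 (N r s m : ℕ) (hN : 2 ≤ N) (hr : 1 ≤ r) (hs : 1 ≤ s)
    (S : Set (Fin (r + s) → ℤ)) (hS : S ⊆ (box N (r + s) : Set (Fin (r + s) → ℤ)))
    (a b : Fin r → ℤ) (ha : a ∈ box N r) (hb : b ∈ box N r) (hab : a ≠ b)
    (h : HasCube ({p : Fin s → ℤ | Fin.append a p ∈ S} ∩ {p : Fin s → ℤ | Fin.append b p ∈ S}) m) :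
    HasCube S (m + 1) :=
  stmt2_general r s m S a b hab h
end

section
/- Let $N \geq 2$ and let $c_n \in (0,1]$ be a sequence with $c_n^{1/n} \to 1$ as $n \to \infty$. Then $f_N(n, c_n) \to \infty$ as $n \to \infty$, where $f_N(n,c)$ is the minimum of $M(S)$ over $S \subseteq \{0,\dots,N-1\}^n$ with $|S| \geq cN^n$. -/
open scoped BigOperators

/-!
Split the coordinates of `ℤ^n` into a first block of `k` coordinates and the rest, so that a set
`S` of density `γ` in the box is a dense subset of a product whose first factor `[N]^k` is a large
alphabet. Cauchy–Schwarz over the fibres of the first block yields two distinct values `a ≠ b`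
whose fibres meet in a set of density at least `γ² / 2`; an `(m - 1)`-cube in that intersection
extends by the direction `(b - a, 0)` to an `m`-cube in `S`. Iterating `m` times only needs
`(2 / γ) ^ 2 ^ m ≤ N ^ k` and `m * k ≤ n`, which holds for `k = n / m` once `n` is large, since
`c_n` decays subexponentially.
-/

open Finset hiding box

section AffineCube

variable {V W : Type*} [AddCommGroup V] [AddCommGroup W]

def cubeMap {m : ℕ} (z : V) (d : Fin m → V) (y : Fin m → ℤ) : V := z + ∑ i, y i • d i

def HasAffineCube (S : Set V) (m : ℕ) : Prop :=
  ∃ (z : V) (d : Fin m → V), Set.InjOn (cubeMap z d) (cube m) ∧ Set.MapsTo (cubeMap z d) (cube m) S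

theorem hasAffineCube_zero {S : Set V} (hS : S.Nonempty) : HasAffineCube S 0 := by
  obtain ⟨z, hz⟩ := hS
  refine ⟨z, finZeroElim, fun y _ y' _ _ => Subsingleton.elim y y', fun y _ => ?_⟩
  simpa [cubeMap] using hz

theorem HasAffineCube.map {S : Set V} {T : Set W} {m : ℕ} (h : HasAffineCube S m) (f : V →+ W)
    (hf : Function.Injective f) (hST : Set.MapsTo f S T) : HasAffineCube T m := by
  obtain ⟨z, d, hinj, hmaps⟩ := h
  have hcomm : cubeMap (f z) (f ∘ d) = f ∘ cubeMap z d := by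
    ext y
    simp [cubeMap, map_sum, map_zsmul]
  exact ⟨f z, f ∘ d, hcomm ▸ hf.comp_injOn hinj, hcomm ▸ hST.comp hmaps⟩

theorem HasAffineCube.prod_succ {H : Type*} [AddCommGroup H] {S : Set (V × H)} {T : Set H}
    {m : ℕ} (hT : HasAffineCube T m) {a b : V} (hab : a ≠ b) (ha : ∀ c ∈ T, (a, c) ∈ S)
    (hb : ∀ c ∈ T, (b, c) ∈ S) : HasAffineCube S (m + 1) := by
  obtain ⟨z, d, hinj, hmaps⟩ := hT
  have hsplit (y : Fin (m + 1) → ℤ) : cubeMap (a, z) (Fin.cons (b - a, 0) fun i => (0, d i)) y =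
      (a + y 0 • (b - a), cubeMap z d (Fin.tail y)) := by
    ext <;> simp [cubeMap, Fin.sum_univ_succ, Prod.fst_sum, Prod.snd_sum, Fin.tail]
  have htail {y : Fin (m + 1) → ℤ} (hy : y ∈ cube (m + 1)) : Fin.tail y ∈ cube m :=
    fun i => hy i.succ
  refine ⟨(a, z), Fin.cons (b - a, 0) fun i => (0, d i), fun y hy y' hy' heq => ?_, fun y hy => ?_⟩
  · rw [hsplit, hsplit, Prod.mk.injEq] at heq
    have h0 : y 0 = y' 0 := by
      rcases hy 0 with h | h <;> rcases hy' 0 with h' | h' <;>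
        simp_all [eq_comm]
    rw [← Fin.cons_self_tail y, ← Fin.cons_self_tail y', h0, hinj (htail hy) (htail hy') heq.2]
  · show _ ∈ S
    rw [hsplit]
    rcases hy 0 with h | h
    · simpa [h] using ha _ (hmaps (htail hy))
    · simpa [h] using hb _ (hmaps (htail hy))

end AffineCube

theorem HasAffineCube.hasCube {n m : ℕ} {S : Set (Fin n → ℤ)} (h : HasAffineCube S m) :
    HasCube S m := by
  obtain ⟨z, d, hinj, hmaps⟩ := h
  refine ⟨cubeMap z d, ⟨Matrix.of fun p i => d i p, z, fun y _ => ?_⟩, hinj, hmaps.image_subset⟩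
  ext p
  simp [cubeMap, Matrix.mulVec, dotProduct, mul_comm, add_comm]

theorem cube_eq_piFinset (m : ℕ) :
    cube m = ↑(Fintype.piFinset fun _ : Fin m => ({0, 1} : Finset ℤ)) := by
  ext y
  simp [cube]

theorem HasCube.two_pow_le_card {n m : ℕ} {S : Finset (Fin n → ℤ)}
    (h : HasCube (S : Set (Fin n → ℤ)) m) : 2 ^ m ≤ #S := by
  obtain ⟨ι, -, hinj, himage⟩ := h
  rw [cube_eq_piFinset] at hinj himage
  simpa using card_le_card_of_injOn ι (fun y hy => himage ⟨y, hy, rfl⟩) hinj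

theorem HasCube.le_Mval {n m : ℕ} {S : Finset (Fin n → ℤ)}
    (h : HasCube (S : Set (Fin n → ℤ)) m) : m ≤ Mval (S : Set (Fin n → ℤ)) :=
  le_csSup ⟨#S, fun _ hm' => Nat.lt_two_pow_self.le.trans hm'.two_pow_le_card⟩ h

theorem exists_ne_le_sum_mul {α β : Type*} [DecidableEq α] {B : Finset α} {C : Finset β}
    {s : α → β → ℝ} (hs : ∀ a c, |s a c| ≤ 1) {γ : ℝ} (hγ0 : 0 ≤ γ) (hγ1 : γ ≤ 1)
    (hB : 2 ≤ γ ^ 2 * #B) (hsum : γ * (#B * #C) ≤ ∑ a ∈ B, ∑ c ∈ C, s a c) :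
    ∃ a ∈ B, ∃ b ∈ B, a ≠ b ∧ γ ^ 2 / 2 * #C ≤ ∑ c ∈ C, s a c * s b c := by
  set D : β → ℝ := fun c => ∑ a ∈ B, s a c
  have hpairs : ∑ p ∈ B ×ˢ B, ∑ c ∈ C, s p.1 c * s p.2 c = ∑ c ∈ C, D c ^ 2 := by
    simp only [D, sq, sum_mul_sum, sum_product]
    exact (sum_congr rfl fun a _ => sum_comm).trans sum_comm
  have hdiag : ∑ p ∈ B.diag, ∑ c ∈ C, s p.1 c * s p.2 c ≤ #B * #C := by
    rw [sum_diag]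
    calc ∑ a ∈ B, ∑ c ∈ C, s a c * s a c ≤ ∑ _a ∈ B, ∑ _c ∈ C, (1 : ℝ) := by
          gcongr with a _ c _
          rw [← sq]
          exact sq_le_one_iff_abs_le_one _ |>.2 (hs a c)
      _ = #B * #C := by simp
  -- Summing `(D c - γ |B|) ^ 2 ≥ 0` replaces Cauchy–Schwarz.
  have hsq : γ ^ 2 * #B ^ 2 * #C ≤ ∑ c ∈ C, D c ^ 2 := by
    have hexpand : ∑ c ∈ C, (D c - γ * #B) ^ 2 =
        ∑ c ∈ C, D c ^ 2 - 2 * γ * #B * ∑ a ∈ B, ∑ c ∈ C, s a c + γ ^ 2 * #B ^ 2 * #C := by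
      simp only [D, sub_sq, sum_add_distrib, sum_sub_distrib, sum_const, nsmul_eq_mul, ← mul_sum,
        ← sum_mul]
      rw [sum_comm]
      ring
    have := sum_nonneg fun c (_ : c ∈ C) => sq_nonneg (D c - γ * #B)
    have := mul_le_mul_of_nonneg_left hsum (by positivity : (0 : ℝ) ≤ 2 * γ * #B)
    nlinarith
  have hoff : γ ^ 2 / 2 * #B ^ 2 * #C ≤ ∑ p ∈ B.offDiag, ∑ c ∈ C, s p.1 c * s p.2 c := by
    have hsplit := sum_union (disjoint_diag_offDiag B) (f := fun p => ∑ c ∈ C, s p.1 c * s p.2 c)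
    rw [diag_union_offDiag, hpairs] at hsplit
    have : (#B : ℝ) * #C ≤ γ ^ 2 / 2 * #B ^ 2 * #C := by
      have := mul_le_mul_of_nonneg_right hB (by positivity : (0 : ℝ) ≤ #B * #C)
      nlinarith
    linarith
  have hcard : (2 : ℝ) ≤ #B :=
    hB.trans (mul_le_of_le_one_left (Nat.cast_nonneg _) (pow_le_one₀ hγ0 hγ1))
  obtain ⟨a, ha, b, hb, hab⟩ := one_lt_card.1 (by exact_mod_cast hcard)
  obtain ⟨p, hp, hle⟩ := exists_le_of_sum_le (f := fun _ => γ ^ 2 / 2 * #C)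
    ⟨(a, b), mem_offDiag.2 ⟨ha, hb, hab⟩⟩ <| by
      calc ∑ _p ∈ B.offDiag, γ ^ 2 / 2 * (#C : ℝ) ≤ ∑ _p ∈ B ×ˢ B, γ ^ 2 / 2 * (#C : ℝ) := by
            refine sum_le_sum_of_subset_of_nonneg (fun p hp => ?_) fun _ _ _ => by positivity
            obtain ⟨hp1, hp2, -⟩ := mem_offDiag.1 hp
            exact mem_product.2 ⟨hp1, hp2⟩
        _ = γ ^ 2 / 2 * #B ^ 2 * #C := by
          rw [sum_const, card_product, nsmul_eq_mul]
          push_cast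
          ring
        _ ≤ _ := hoff
  obtain ⟨hp1, hp2, hp12⟩ := mem_offDiag.1 hp
  exact ⟨p.1, hp1, p.2, hp2, hp12, hle⟩

theorem exists_ne_le_card_fiber_inter {α β : Type*} [DecidableEq α] [DecidableEq β]
    {B : Finset α} {C : Finset β} {S : Finset (α × β)} (hS : S ⊆ B ×ˢ C) {γ : ℝ} (hγ0 : 0 ≤ γ)
    (hγ1 : γ ≤ 1) (hB : 2 ≤ γ ^ 2 * #B) (hcard : γ * (#B * #C) ≤ #S) :
    ∃ a ∈ B, ∃ b ∈ B, a ≠ b ∧ γ ^ 2 / 2 * #C ≤ #{c ∈ C | (a, c) ∈ S ∧ (b, c) ∈ S} := by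
  have hsum : (#S : ℝ) = ∑ a ∈ B, ∑ c ∈ C, if (a, c) ∈ S then 1 else 0 := by
    rw [← sum_product (f := fun p => if p ∈ S then (1 : ℝ) else 0), ← natCast_card_filter,
      filter_mem_eq_inter, inter_eq_right.2 hS]
  obtain ⟨a, ha, b, hb, hab, hle⟩ := exists_ne_le_sum_mul
    (s := fun a c => if (a, c) ∈ S then (1 : ℝ) else 0) (fun a c => by split_ifs <;> simp)
    hγ0 hγ1 hB (hsum ▸ hcard)
  refine ⟨a, ha, b, hb, hab, ?_⟩
  simpa only [natCast_card_filter, ite_zero_mul_ite_zero, one_mul] using hle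

theorem card_box (N n : ℕ) : #(box N n) = N ^ n := by
  simp [box]

def finAddLinearEquivProd (k n : ℕ) : (Fin (k + n) → ℤ) ≃ₗ[ℤ] (Fin k → ℤ) × (Fin n → ℤ) :=
  (LinearEquiv.funCongrLeft ℤ ℤ finSumFinEquiv).trans (LinearEquiv.sumArrowLequivProdArrow _ _ ℤ ℤ)

theorem mem_box_add_iff {N k n : ℕ} {x : Fin (k + n) → ℤ} :
    x ∈ box N (k + n) ↔ finAddLinearEquivProd k n x ∈ box N k ×ˢ box N n := by
  simp [box, finAddLinearEquivProd, Fin.forall_fin_add]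

theorem hasAffineCube_of_le_card {N k : ℕ} (hN : 0 < N) (m : ℕ) :
    ∀ n, m * k ≤ n → ∀ γ : ℝ, 0 < γ → γ ≤ 1 → (2 / γ) ^ 2 ^ m ≤ (N : ℝ) ^ k →
      ∀ S ⊆ box N n, γ * (N : ℝ) ^ n ≤ #S → HasAffineCube (S : Set (Fin n → ℤ)) m := by
  induction m with
  | zero =>
    intro n _ γ hγ _ _ S _ hcard
    refine hasAffineCube_zero (S.coe_nonempty.2 (card_pos.1 ?_))
    exact_mod_cast (by positivity : 0 < γ * (N : ℝ) ^ n).trans_le hcard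
  | succ m ih =>
    intro n hn γ hγ0 hγ1 hγk S hS hcard
    rw [Nat.succ_mul] at hn
    obtain ⟨n, rfl⟩ := Nat.exists_eq_add_of_le (show k ≤ n by omega)
    set e := finAddLinearEquivProd k n
    set S' := S.map e.toEquiv.toEmbedding
    have hS' : S' ⊆ box N k ×ˢ box N n := by
      intro p hp
      obtain ⟨x, hx, rfl⟩ := mem_map.1 hp
      exact mem_box_add_iff.1 (hS hx)
    have hγ2 : (2 / (γ ^ 2 / 2)) ^ 2 ^ m = (2 / γ) ^ 2 ^ (m + 1) := by
      rw [pow_succ' 2 m, pow_mul]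
      congr 1
      field_simp
    have hB : 2 ≤ γ ^ 2 * #(box N k) := by
      have h1 : 1 ≤ 2 / γ := by rw [le_div_iff₀ hγ0]; linarith
      have h2 : (2 / γ) ^ 2 ≤ (N : ℝ) ^ k :=
        (pow_le_pow_right₀ h1 (Nat.le_self_pow (Nat.succ_ne_zero m) 2)).trans hγk
      rw [div_pow, div_le_iff₀ (by positivity)] at h2
      rw [card_box]
      push_cast
      nlinarith
    obtain ⟨a, -, b, -, hab, hT⟩ := exists_ne_le_card_fiber_inter hS' hγ0.le hγ1 hB (by
      rw [card_map, card_box, card_box]; push_cast; rwa [← pow_add])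
    have hTcube := ih n (by omega) (γ ^ 2 / 2) (by positivity) (by nlinarith) (hγ2 ▸ hγk) _
      (filter_subset _ _) (by rw [card_box] at hT; exact_mod_cast hT)
    refine (hTcube.prod_succ (S := S') hab (fun c hc => (mem_filter.1 hc).2.1)
      (fun c hc => (mem_filter.1 hc).2.2)).map e.symm.toAddMonoidHom e.symm.injective ?_
    intro p hp
    obtain ⟨x, hx, rfl⟩ := mem_map.1 hp
    simpa using hx

theorem le_fN {N n m k : ℕ} {c : ℝ} (hN : 0 < N) (hc0 : 0 < c) (hc1 : c ≤ 1) (hmk : m * k ≤ n)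
    (hck : (2 / c) ^ 2 ^ m ≤ (N : ℝ) ^ k) : m ≤ fN N n c := by
  refine le_csInf ⟨_, box N n, subset_rfl, ?_, rfl⟩ ?_
  · rw [card_box]
    push_cast
    exact mul_le_of_le_one_left (by positivity) hc1
  · rintro _ ⟨S, hS, hcard, rfl⟩
    exact (hasAffineCube_of_le_card hN m n hmk c hc0 hc1 hck S hS hcard).hasCube.le_Mval

open Filter Topology in
theorem eventually_two_div_pow_le_two_pow {c : ℕ → ℝ} (hc : ∀ n, 0 < c n ∧ c n ≤ 1)
    (hlim : Tendsto (fun n : ℕ => c n ^ (n : ℝ)⁻¹) atTop (𝓝 1)) {m : ℕ} (hm : 0 < m) :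
    ∀ᶠ n in atTop, (2 / c n) ^ 2 ^ m ≤ (2 : ℝ) ^ (n / m) := by
  -- Any constant above `1 / 2` would do: it makes `(3 / 4) ^ (k + 1) * 2 ^ k` unbounded.
  have hroot : ∀ᶠ n in atTop, 3 / 4 ≤ (c n ^ (n : ℝ)⁻¹) ^ (m * 2 ^ m) := by
    have := hlim.pow (m * 2 ^ m)
    rw [one_pow] at this
    exact this.eventually (eventually_ge_nhds (by norm_num))
  have hgrowth : ∀ᶠ n in atTop, (2 : ℝ) ^ 2 ^ m ≤ 3 / 4 * (3 / 2) ^ (n / m) :=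
    (((tendsto_pow_atTop_atTop_of_one_lt (by norm_num : (1 : ℝ) < 3 / 2)).comp
      (Nat.tendsto_div_const_atTop hm.ne')).const_mul_atTop (by norm_num)).eventually_ge_atTop _
  filter_upwards [hroot, hgrowth, eventually_ne_atTop 0] with n hroot hgrowth hn
  set δ := c n ^ (n : ℝ)⁻¹
  have hδ0 : 0 ≤ δ := Real.rpow_nonneg (hc n).1.le _
  have hδ1 : δ ≤ 1 := Real.rpow_le_one (hc n).1.le (hc n).2 (by positivity)
  have hcδ : c n = δ ^ n := (Real.rpow_inv_natCast_pow (hc n).1.le hn).symm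
  have hc_pow : (3 / 4) ^ (n / m + 1) ≤ c n ^ 2 ^ m := by
    calc (3 / 4 : ℝ) ^ (n / m + 1) ≤ (δ ^ (m * 2 ^ m)) ^ (n / m + 1) := by gcongr
      _ ≤ δ ^ (n * 2 ^ m) := by
        rw [← pow_mul]
        refine pow_le_pow_of_le_one hδ0 hδ1 ?_
        exact (Nat.mul_le_mul_right _ (Nat.lt_mul_div_succ n hm).le).trans_eq (by ring)
      _ = c n ^ 2 ^ m := by rw [hcδ, pow_mul]
  rw [div_pow, div_le_iff₀ (pow_pos (hc n).1 _)]
  calc (2 : ℝ) ^ 2 ^ m ≤ 3 / 4 * (3 / 2) ^ (n / m) := hgrowth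
    _ = (3 / 4) ^ (n / m + 1) * 2 ^ (n / m) := by
      rw [pow_succ, mul_right_comm, ← mul_pow, mul_comm]
      norm_num
    _ ≤ c n ^ 2 ^ m * 2 ^ (n / m) := by gcongr
    _ = _ := mul_comm _ _

theorem stmt14 (N : ℕ) (hN : 2 ≤ N) (c : ℕ → ℝ) (hc : ∀ n, 0 < c n ∧ c n ≤ 1)
    (hlim : Filter.Tendsto (fun n : ℕ => (c n) ^ ((n : ℝ)⁻¹)) Filter.atTop (nhds 1)) :
    Filter.Tendsto (fun n : ℕ => fN N n (c n)) Filter.atTop Filter.atTop := by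
  refine Filter.tendsto_atTop.2 fun m => ?_
  obtain rfl | hm := m.eq_zero_or_pos
  · exact Filter.Eventually.of_forall fun _ => Nat.zero_le _
  filter_upwards [eventually_two_div_pow_le_two_pow hc hlim hm] with n hn
  refine le_fN (by omega) (hc n).1 (hc n).2 (Nat.mul_div_le n m) (hn.trans ?_)
  gcongr
  exact_mod_cast hN
end
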